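/- Let L be a p.c.f. self-similar structure with surjection π satisfying shift-descent, and suppose π(\bar{z} xₙ…x₁ w) = π(\bar{z} yₙ…y₁ w) holds for all w ∈ X*. Then for any choices ξ_j ∈ {x_j, y_j} (1 ≤ j ≤ n), π(\bar{z} ξₙ…ξ₁ w) = π(\bar{z} xₙ…x₁ w) for all w ∈ X*. -/
import Mathlib


/-- Appending the letter `i` at the right end of a left-infinite word. -/
def appendLetter {X : Type*} (i : X) (w : ℕ → X) : ℕ → X
  | 0 => i
  | n + 1 => w n

/-- Appending a finite word (first-read letter at the head of the list). -/
def appendWord {X : Type*} : List X → (ℕ → X) → (ℕ → X)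
  | [], ξ => ξ
  | a :: l, ξ => appendLetter a (appendWord l ξ)

/-- The left-infinite periodic word `\bar z = …zzz`. -/
def periodicWord {X : Type*} (z : List X) (hz : 0 < z.length) : ℕ → X :=
  fun n => z.get ⟨n % z.length, Nat.mod_lt _ hz⟩

lemma appendWord_append {X : Type*} (w₁ w₂ : List X) (ξ : ℕ → X) :
    appendWord (w₁ ++ w₂) ξ = appendWord w₁ (appendWord w₂ ξ) := by
  induction w₁ with
  | nil => rfl
  | cons a l ih => simp [appendWord, ih]

lemma shift_appendLetter {X : Type*} (a : X) (ξ : ℕ → X) :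
    (fun k => appendLetter a ξ (k + 1)) = ξ := rfl

lemma pi_extend {X K : Type*} (π : (ℕ → X) → K) (F : X → K → K)
    (hrel : ∀ (i : X) (ξ : ℕ → X), F i (π ξ) = π (appendLetter i ξ))
    {ξ η : ℕ → X} (h : π ξ = π η) (w : List X) :
    π (appendWord w ξ) = π (appendWord w η) := by
  induction w with
  | nil => exact h
  | cons a l ih => rw [appendWord, appendWord, ← hrel, ← hrel, ih]

lemma key {X K : Type*} (π : (ℕ → X) → K) (F : X → K → K)
    (hrel : ∀ (i : X) (ξ : ℕ → X), F i (π ξ) = π (appendLetter i ξ))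
    (hshift : ∀ ξ η : ℕ → X, π ξ = π η →
      π (fun k => ξ (k + 1)) = π (fun k => η (k + 1)))
    (ζ : ℕ → X) :
    ∀ (ξs xs ys : List X), ξs.length = xs.length → xs.length = ys.length →
      (∀ w : List X, π (appendWord w (appendWord xs ζ)) = π (appendWord w (appendWord ys ζ))) →
      (∀ (j : ℕ) (hj : j < ξs.length) (hj1 : j < xs.length) (hj2 : j < ys.length),
        ξs.get ⟨j, hj⟩ = xs.get ⟨j, hj1⟩ ∨ ξs.get ⟨j, hj⟩ = ys.get ⟨j, hj2⟩) →
      ∀ w : List X,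
        π (appendWord w (appendWord ξs ζ)) = π (appendWord w (appendWord xs ζ)) := by
  intro ξs
  induction ξs with
  | nil =>
    intro xs ys h1 h2 heq hmem w
    have : xs = [] := List.eq_nil_of_length_eq_zero h1.symm
    subst this
    rfl
  | cons c ξs' ih =>
    intro xs ys h1 h2 heq hmem w
    match xs, ys with
    | [], _ => simp at h1
    | _ :: _, [] => simp at h2
    | a :: xs', b :: ys' =>
      -- tail equality for xs', ys'
      have htail0 : π (appendWord xs' ζ) = π (appendWord ys' ζ) := by
        have := hshift _ _ (heq [])
        simpa [appendWord, shift_appendLetter] using this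
      have heq' : ∀ w : List X,
          π (appendWord w (appendWord xs' ζ)) = π (appendWord w (appendWord ys' ζ)) :=
        fun w => pi_extend π F hrel htail0 w
      have ih' : ∀ w : List X,
          π (appendWord w (appendWord ξs' ζ)) = π (appendWord w (appendWord xs' ζ)) := by
        apply ih xs' ys' (by simpa using h1) (by simpa using h2) heq'
        intro j hj hj1 hj2
        exact hmem (j+1) (by simpa using Nat.succ_lt_succ hj)
          (by simpa using Nat.succ_lt_succ hj1) (by simpa using Nat.succ_lt_succ hj2)
      have hstep : π (appendWord w (appendWord (c :: ξs') ζ))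
          = π (appendWord w (appendWord (c :: xs') ζ)) := by
        have e1 := ih' (w ++ [c])
        rwa [appendWord_append, appendWord_append] at e1
      rw [hstep]
      rcases hmem 0 (by simp) (by simp) (by simp) with hc | hc
      · simp only [List.get] at hc; rw [hc]
      · simp only [List.get] at hc; rw [hc]
        have e2 := heq' (w ++ [b])
        rw [appendWord_append, appendWord_append] at e2
        have e3 := heq w
        calc π (appendWord w (appendWord (b :: xs') ζ))
            = π (appendWord w (appendWord (b :: ys') ζ)) := e2
          _ = π (appendWord w (appendWord (a :: xs') ζ)) := e3.symm


/-- for a self-similar structure with surjection `π` satisfying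
shift-descent, if `π(\bar z xₙ…x₁ w) = π(\bar z yₙ…y₁ w)` for all finite `w`, then
for any interleaving `ξ_j ∈ {x_j, y_j}` one has
`π(\bar z ξₙ…ξ₁ w) = π(\bar z xₙ…x₁ w)` for all finite `w`. -/
theorem interchange_letters {X K : Type*} [Fintype X]
    [TopologicalSpace X] [DiscreteTopology X]
    [TopologicalSpace K] [CompactSpace K] [TopologicalSpace.MetrizableSpace K]
    (π : (ℕ → X) → K) (hcont : Continuous π) (hsurj : Function.Surjective π)
    (F : X → K → K) (hFc : ∀ i, Continuous (F i)) (hFinj : ∀ i, Function.Injective (F i))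
    (hrel : ∀ (i : X) (ξ : ℕ → X), F i (π ξ) = π (appendLetter i ξ))
    (hshift : ∀ ξ η : ℕ → X, π ξ = π η →
      π (fun k => ξ (k + 1)) = π (fun k => η (k + 1)))
    (z : List X) (hz : 0 < z.length)
    (xs ys : List X) (hlen : xs.length = ys.length)
    (heq : ∀ w : List X,
      π (appendWord w (appendWord xs (periodicWord z hz))) =
      π (appendWord w (appendWord ys (periodicWord z hz)))) :
    ∀ (ξs : List X) (h1 : ξs.length = xs.length),
      (∀ (j : ℕ) (hj : j < ξs.length),
        ξs.get ⟨j, hj⟩ = xs.get ⟨j, by omega⟩ ∨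
        ξs.get ⟨j, hj⟩ = ys.get ⟨j, by omega⟩) →
      ∀ w : List X,
        π (appendWord w (appendWord ξs (periodicWord z hz))) =
        π (appendWord w (appendWord xs (periodicWord z hz))) := by
  intro ξs h1 hmem w
  exact key π F hrel hshift (periodicWord z hz) ξs xs ys h1 hlen heq
    (fun j hj hj1 hj2 => hmem j hj) w
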